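/- arXiv:2603.01342 — 5 statements merged into one kernel-verified Lean document; each statement's English description precedes it below -/
import Mathlib

section
/- Let T ∈ ℝ^{d_1} ⊗ ... ⊗ ℝ^{d_p} be a fixed real tensor, let x_1, ..., x_p be unit vectors with x_i ∈ ℝ^{d_i}, and let φ_1, ..., φ_p be independent standard Gaussian vectors with φ_i ~ N(0, I_{d_i}). Then for every positive integer k, E[⟨T, φ_1 ⊗ ... ⊗ φ_p⟩^{2k}] ≥ ((2k-1)!!)^p · ⟨T, x_1 ⊗ ... ⊗ x_p⟩^{2k}. -/
/-!
Condition on `φ₁`. Writing `⟨T, φ₁ ⊗ ψ⟩ = ∑ᵢ cᵢ(ψ) φ₁ᵢ`, where `cᵢ(ψ)` pairs the `i`-th slice of `T`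
with `ψ = φ₂ ⊗ ⋯ ⊗ φ_p`, the inner expectation is the `2k`-th moment of a centred Gaussian of
variance `‖c(ψ)‖²`, i.e. `(2k-1)!! ‖c(ψ)‖^{2k}`. By Cauchy–Schwarz `‖c(ψ)‖ ≥ |⟨c(ψ), x₁⟩|`, and
`⟨c(ψ), x₁⟩ = ⟨T', ψ⟩` for the tensor `T'` obtained by contracting `T` with `x₁`; induct on `p`.
The Gaussian moments `E[X^{2k}] = (2k-1)!!` come from Stein's identity
`E[X^{m+2}] = (m+1) E[X^m]`.
-/

open Nat MeasureTheory ProbabilityTheory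

/-- The pairing `⟨T, x 1 ⊗ ... ⊗ x p⟩ = ∑_{i₁,...,i_p} T_{i₁,...,i_p} (x 1)_{i₁} ⋯ (x p)_{i_p}`
of a real tensor `T ∈ ℝ^{d 1} ⊗ ... ⊗ ℝ^{d p}` with vectors `x i ∈ ℝ^{d i}`. -/
noncomputable def tensorPair {p : ℕ} {d : Fin p → ℕ}
    (T : ((i : Fin p) → Fin (d i)) → ℝ) (x : (i : Fin p) → Fin (d i) → ℝ) : ℝ :=
  ∑ f : (i : Fin p) → Fin (d i), T f * ∏ i, x i (f i)

lemma factorial_two_mul_div_eq_doubleFactorial (k : ℕ) :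
    ((2 * k)! : ℝ) / (2 ^ k * k !) = (2 * k - 1)‼ := by
  have h : (2 * k)! = 2 ^ k * k ! * (2 * k - 1)‼ := by
    cases k with
    | zero => rfl
    | succ k =>
      rw [show 2 * (k + 1) = 2 * k + 1 + 1 by ring, factorial_eq_mul_doubleFactorial,
        show 2 * k + 1 + 1 = 2 * (k + 1) by ring, doubleFactorial_two_mul,
        show 2 * (k + 1) - 1 = 2 * k + 1 by omega]
  rw [h]
  push_cast
  exact mul_div_cancel_left₀ _ (by positivity)

section GaussianMoments

open Real

lemma integrable_pow_mul_exp_neg_sq_div_two (m : ℕ) :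
    Integrable fun x : ℝ => x ^ m * exp (-x ^ 2 / 2) := by
  have h := integrable_rpow_mul_exp_neg_mul_sq (b := 1 / 2) (by norm_num) (s := m)
    (by linarith [m.cast_nonneg (α := ℝ)])
  simp_rw [rpow_natCast] at h
  convert h using 4
  ring

lemma integral_pow_add_two_mul_exp_neg_sq_div_two (m : ℕ) :
    ∫ x : ℝ, x ^ (m + 2) * exp (-x ^ 2 / 2) = (m + 1) * ∫ x : ℝ, x ^ m * exp (-x ^ 2 / 2) := by
  have hderiv (x : ℝ) : HasDerivAt (fun y => y ^ (m + 1) * exp (-y ^ 2 / 2))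
      ((m + 1) * (x ^ m * exp (-x ^ 2 / 2)) - x ^ (m + 2) * exp (-x ^ 2 / 2)) x := by
    have h := ((hasDerivAt_id' x).fun_pow (m + 1)).fun_mul
      ((((hasDerivAt_id' x).fun_pow 2).fun_neg.div_const 2).exp)
    refine h.congr_deriv ?_
    simp only [Nat.add_sub_cancel, mul_one]
    push_cast
    ring
  have h := integral_eq_zero_of_hasDerivAt_of_integrable hderiv
    (((integrable_pow_mul_exp_neg_sq_div_two m).const_mul _).sub
      (integrable_pow_mul_exp_neg_sq_div_two (m + 2)))
    (integrable_pow_mul_exp_neg_sq_div_two (m + 1))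
  rw [integral_sub ((integrable_pow_mul_exp_neg_sq_div_two m).const_mul _)
    (integrable_pow_mul_exp_neg_sq_div_two (m + 2)), integral_const_mul, sub_eq_zero] at h
  exact h.symm

lemma integral_gaussianReal_zero_one_eq_integral_mul_exp (f : ℝ → ℝ) :
    ∫ x, f x ∂gaussianReal 0 1 = (√(2 * π))⁻¹ * ∫ x, f x * exp (-x ^ 2 / 2) := by
  rw [integral_gaussianReal_eq_integral_smul one_ne_zero, ← integral_const_mul]
  congr 1 with x
  simp only [gaussianPDFReal, NNReal.coe_one, mul_one, sub_zero, smul_eq_mul]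
  ring

lemma integral_pow_add_two_gaussianReal_zero_one (m : ℕ) :
    ∫ x, x ^ (m + 2) ∂gaussianReal 0 1 = (m + 1) * ∫ x, x ^ m ∂gaussianReal 0 1 := by
  simp only [integral_gaussianReal_zero_one_eq_integral_mul_exp,
    integral_pow_add_two_mul_exp_neg_sq_div_two, mul_left_comm]

theorem integral_pow_two_mul_gaussianReal_zero_one (k : ℕ) :
    ∫ x, x ^ (2 * k) ∂gaussianReal 0 1 = (2 * k - 1)‼ := by
  induction k with
  | zero => simp
  | succ k ih =>
    rw [mul_add_one, integral_pow_add_two_gaussianReal_zero_one, ih,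
      show 2 * k + 2 - 1 = 2 * k + 1 by omega, doubleFactorial_add_one]
    push_cast
    ring

theorem integral_pow_two_mul_gaussianReal (v : NNReal) (k : ℕ) :
    ∫ x, x ^ (2 * k) ∂gaussianReal 0 v = v ^ k * (2 * k - 1)‼ := by
  have hv : gaussianReal 0 v = (gaussianReal 0 1).map (√(v : ℝ) * ·) := by
    rw [gaussianReal_map_const_mul, mul_zero, mul_one]
    congr
    ext
    simp
  rw [hv, integral_map (by fun_prop) (by fun_prop)]
  simp_rw [mul_pow]
  rw [integral_const_mul, integral_pow_two_mul_gaussianReal_zero_one, pow_mul,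
    Real.sq_sqrt v.coe_nonneg]

end GaussianMoments

theorem map_pi_gaussianReal_sum_mul {ι : Type*} [Fintype ι] (a : ι → ℝ) :
    (Measure.pi fun _ : ι => gaussianReal 0 1).map (fun w => ∑ i, a i * w i) =
      gaussianReal 0 (∑ i, a i ^ 2).toNNReal := by
  let L : StrongDual ℝ (EuclideanSpace ℝ ι) := innerSL ℝ (WithLp.toLp 2 a)
  have hL : (fun w : ι → ℝ => ∑ i, a i * w i) = L ∘ WithLp.toLp 2 := by
    ext w
    simp [L, PiLp.inner_apply, mul_comm]
  rw [hL, ← Measure.map_map L.continuous.measurable (by fun_prop), map_pi_eq_stdGaussian,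
    IsGaussian.map_eq_gaussianReal, integral_strongDual_stdGaussian, variance_dual_stdGaussian,
    innerSL_apply_norm, EuclideanSpace.real_norm_sq_eq]

theorem integral_sum_mul_pow_two_mul_pi_gaussianReal {ι : Type*} [Fintype ι] (a : ι → ℝ)
    (k : ℕ) :
    ∫ w, (∑ i, a i * w i) ^ (2 * k) ∂Measure.pi (fun _ : ι => gaussianReal 0 1) =
      (∑ i, a i ^ 2) ^ k * (2 * k - 1)‼ := by
  rw [← integral_map (f := fun y : ℝ => y ^ (2 * k))
    (by fun_prop : Measurable fun w : ι → ℝ => ∑ i, a i * w i).aemeasurable (by fun_prop),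
    map_pi_gaussianReal_sum_mul, integral_pow_two_mul_gaussianReal,
    Real.coe_toNNReal _ (Finset.sum_nonneg fun i _ => sq_nonneg (a i))]

section Fubini

variable {n : ℕ} {E : Fin (n + 1) → Type*} [∀ i, MeasurableSpace (E i)]
  {μ : (i : Fin (n + 1)) → Measure (E i)} [∀ i, SigmaFinite (μ i)]
  {F : ((i : Fin (n + 1)) → E i) → ℝ}

lemma integrable_pi_fin_succ_iff :
    Integrable F (Measure.pi μ) ↔
      Integrable (fun z : E 0 × ((j : Fin n) → E j.succ) => F (Fin.cons z.1 z.2))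
        ((μ 0).prod (Measure.pi fun j => μ j.succ)) := by
  rw [← ((measurePreserving_piFinSuccAbove μ 0).symm).integrable_comp_emb
    (MeasurableEquiv.measurableEmbedding _)]
  simp_rw [MeasurableEquiv.piFinSuccAbove_symm_apply, Fin.insertNthEquiv, Equiv.coe_fn_mk,
    Fin.insertNth_zero]
  rfl

lemma integral_pi_fin_succ (hF : Integrable F (Measure.pi μ)) :
    ∫ x, F x ∂Measure.pi μ = ∫ y, ∫ x₀, F (Fin.cons x₀ y) ∂μ 0 ∂Measure.pi fun j => μ j.succ := by
  rw [← ((measurePreserving_piFinSuccAbove μ 0).symm).integral_comp',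
    ← integral_prod_symm _ (integrable_pi_fin_succ_iff.1 hF)]
  simp_rw [MeasurableEquiv.piFinSuccAbove_symm_apply, Fin.insertNthEquiv, Equiv.coe_fn_mk,
    Fin.insertNth_zero]
  rfl

end Fubini

section Tensor

variable {p : ℕ}

lemma tensorPair_sum_mul {d : Fin p → ℕ} {ι : Type*} [Fintype ι]
    (S : ι → ((i : Fin p) → Fin (d i)) → ℝ) (c : ι → ℝ) (g : (i : Fin p) → Fin (d i) → ℝ) :
    tensorPair (fun f => ∑ j, S j f * c j) g = ∑ j, tensorPair (S j) g * c j := by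
  simp only [tensorPair, Finset.sum_mul]
  rw [Finset.sum_comm]
  refine Finset.sum_congr rfl fun j _ => Finset.sum_congr rfl fun f _ => ?_
  ring

lemma tensorPair_cons {d : Fin (p + 1) → ℕ} (T : ((i : Fin (p + 1)) → Fin (d i)) → ℝ)
    (x₀ : Fin (d 0) → ℝ) (y : (j : Fin p) → Fin (d j.succ) → ℝ) :
    tensorPair T (Fin.cons x₀ y : (i : Fin (p + 1)) → Fin (d i) → ℝ) =
      ∑ i, tensorPair (fun f => T (Fin.cons i f)) y * x₀ i := by
  simp only [tensorPair, Finset.sum_mul]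
  rw [← (Fin.consEquiv fun i => Fin (d i)).sum_comp, Fintype.sum_prod_type]
  refine Finset.sum_congr rfl fun i _ => Finset.sum_congr rfl fun f _ => ?_
  simp only [Fin.consEquiv, Equiv.coe_fn_mk, Fin.prod_univ_succ, Fin.cons_zero, Fin.cons_succ]
  ring

lemma abs_tensorPair_le {d : Fin p → ℕ} (T : ((i : Fin p) → Fin (d i)) → ℝ)
    (g : (i : Fin p) → Fin (d i) → ℝ) :
    |tensorPair T g| ≤ (∑ f, |T f|) * ∏ i, ∑ j, |g i j| := by
  rw [Finset.prod_univ_sum, Fintype.piFinset_univ, Finset.sum_mul_sum]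
  refine (Finset.abs_sum_le_sum_abs _ _).trans (Finset.sum_le_sum fun f _ => ?_)
  rw [abs_mul, Finset.abs_prod]
  exact Finset.single_le_sum (f := fun f' => |T f| * ∏ i, |g i (f' i)|)
    (fun _ _ => by positivity) (Finset.mem_univ f)

end Tensor

lemma integrable_sum_abs_pow_pi_gaussianReal {ι : Type*} [Fintype ι] (m : ℕ) :
    Integrable (fun w : ι → ℝ => (∑ j, |w j|) ^ m) (Measure.pi fun _ => gaussianReal 0 1) := by
  have h : MemLp (fun w : ι → ℝ => ∑ j, |w j|) m (Measure.pi fun _ => gaussianReal 0 1) :=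
    memLp_finsetSum _ fun j _ =>
      (memLp_id_gaussianReal' m (by simp)).norm.comp_measurePreserving (measurePreserving_eval _ j)
  simpa [abs_of_nonneg (Finset.sum_nonneg fun j _ => abs_nonneg (α := ℝ) _)]
    using h.integrable_norm_pow'

lemma integrable_tensorPair_pow {p : ℕ} {d : Fin p → ℕ} (T : ((i : Fin p) → Fin (d i)) → ℝ)
    (m : ℕ) :
    Integrable (fun g => tensorPair T g ^ m)
      (Measure.pi fun i => Measure.pi fun _ : Fin (d i) => gaussianReal 0 1) := by
  refine Integrable.mono'
    ((Integrable.fintype_prod_dep fun i => integrable_sum_abs_pow_pi_gaussianReal m).const_mul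
      ((∑ f, |T f|) ^ m))
    (Continuous.aestronglyMeasurable (by unfold tensorPair; fun_prop)) (ae_of_all _ fun g => ?_)
  rw [norm_pow, Real.norm_eq_abs, Finset.prod_pow, ← mul_pow]
  exact pow_le_pow_left₀ (abs_nonneg _) (abs_tensorPair_le T g) m

theorem doubleFactorial_pow_mul_tensorPair_pow_le_integral {p : ℕ} {d : Fin p → ℕ}
    (T : ((i : Fin p) → Fin (d i)) → ℝ) (x : (i : Fin p) → Fin (d i) → ℝ)
    (hx : ∀ i, ∑ j, x i j ^ 2 = 1) (k : ℕ) :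
    ((2 * k - 1)‼ : ℝ) ^ p * tensorPair T x ^ (2 * k) ≤
      ∫ g, tensorPair T g ^ (2 * k)
        ∂(Measure.pi fun i => Measure.pi fun _ : Fin (d i) => gaussianReal 0 1) := by
  induction p with
  | zero =>
    have hconst (g : (i : Fin 0) → Fin (d i) → ℝ) : tensorPair T g = tensorPair T x := by
      simp [tensorPair]
    simp [hconst]
  | succ p ih =>
    set M : ℝ := ↑(2 * k - 1)‼
    set ν := Measure.pi fun j : Fin p => Measure.pi fun _ : Fin (d j.succ) => gaussianReal 0 1
    let c (i : Fin (d 0)) := tensorPair fun f => T (Fin.cons i f)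
    set T' := fun f => ∑ i, T (Fin.cons i f) * x 0 i
    have hT' (y) : tensorPair T' y = ∑ i, c i y * x 0 i := tensorPair_sum_mul _ _ y
    have hinner (y) : ∫ x₀, tensorPair T (Fin.cons x₀ y) ^ (2 * k) ∂Measure.pi
        (fun _ : Fin (d 0) => gaussianReal 0 1) = (∑ i, c i y ^ 2) ^ k * M := by
      simp_rw [tensorPair_cons]
      exact integral_sum_mul_pow_two_mul_pi_gaussianReal (fun i => c i y) k
    have hcs (y) : tensorPair T' y ^ (2 * k) ≤ (∑ i, c i y ^ 2) ^ k := by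
      rw [pow_mul, hT']
      refine pow_le_pow_left₀ (sq_nonneg _) ?_ k
      simpa [hx 0] using Finset.sum_mul_sq_le_sq_mul_sq Finset.univ (fun i => c i y) (x 0)
    have hx' : tensorPair T' (Fin.tail x) = tensorPair T x := by
      rw [hT', ← tensorPair_cons, Fin.cons_self_tail]
    have hint := integrable_tensorPair_pow T (2 * k)
    calc M ^ (p + 1) * tensorPair T x ^ (2 * k)
        = M * (M ^ p * tensorPair T' (Fin.tail x) ^ (2 * k)) := by rw [hx']; ring
      _ ≤ M * ∫ y, tensorPair T' y ^ (2 * k) ∂ν := by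
        gcongr
        exact ih T' (Fin.tail x) (fun i => hx i.succ)
      _ = ∫ y, M * tensorPair T' y ^ (2 * k) ∂ν :=
        (integral_const_mul _ _).symm
      _ ≤ ∫ y, (∑ i, c i y ^ 2) ^ k * M ∂ν := by
        refine integral_mono_of_nonneg (ae_of_all _ fun y => ?_) ?_ (ae_of_all _ fun y => ?_)
        · exact mul_nonneg (Nat.cast_nonneg _) ((even_two_mul k).pow_nonneg _)
        · simpa only [hinner] using (integrable_pi_fin_succ_iff.1 hint).integral_prod_right
        · exact (mul_comm M _).trans_le (mul_le_mul_of_nonneg_right (hcs y) (Nat.cast_nonneg _))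
      _ = ∫ g, tensorPair T g ^ (2 * k)
            ∂(Measure.pi fun i => Measure.pi fun _ : Fin (d i) => gaussianReal 0 1) := by
        simp_rw [integral_pi_fin_succ hint, hinner]
        rfl

theorem stmt1_general (p : ℕ) (d : Fin p → ℕ)
    (T : ((i : Fin p) → Fin (d i)) → ℝ)
    (x : (i : Fin p) → Fin (d i) → ℝ) (hx : ∀ i, ∑ j, x i j ^ 2 = 1)
    (k : ℕ) :
    (((2 * k)! : ℝ) / (2 ^ k * (k ! : ℝ))) ^ p * tensorPair T x ^ (2 * k) ≤
      ∫ (g : (i : Fin p) → Fin (d i) → ℝ), tensorPair T g ^ (2 * k)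
        ∂(Measure.pi fun i => Measure.pi fun _ : Fin (d i) => gaussianReal 0 1) := by
  rw [factorial_two_mul_div_eq_doubleFactorial]
  exact doubleFactorial_pow_mul_tensorPair_pow_le_integral T x hx k

/-- If `T` is a fixed real tensor, `x i` are unit vectors, and `g i ~ N(0, I_{d i})` are
independent standard Gaussian vectors, then for every positive integer `k`,
`E[⟨T, g 1 ⊗ ... ⊗ g p⟩^(2k)] ≥ ((2k-1)!!)^p ⟨T, x 1 ⊗ ... ⊗ x p⟩^(2k)`,
with `(2k-1)!! = (2k)!/(2^k k!)`. -/
theorem stmt1 (p : ℕ) (hp : 0 < p) (d : Fin p → ℕ)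
    (T : ((i : Fin p) → Fin (d i)) → ℝ)
    (x : (i : Fin p) → Fin (d i) → ℝ) (hx : ∀ i, ∑ j, x i j ^ 2 = 1)
    (k : ℕ) (hk : 0 < k) :
    (((2 * k)! : ℝ) / (2 ^ k * (k ! : ℝ))) ^ p * tensorPair T x ^ (2 * k) ≤
      ∫ (g : (i : Fin p) → Fin (d i) → ℝ), tensorPair T g ^ (2 * k)
        ∂(Measure.pi fun i => Measure.pi fun _ : Fin (d i) => gaussianReal 0 1) :=
  stmt1_general p d T x hx k
end

section
/- For fixed positive integers β and fixed α > 0, setting k = ⌊α p log p⌋, one has lim_{p→∞} [ binom(β + k, k)^{p/(2k)} / exp(β/(2α)) − 1 ] · (log p / log log p) = β/(2α). -/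
/-! The elementary bounds `(k+1)^β ≤ β! C(β+k,k) ≤ (k+β)^β` give
`log C(β+k,k) = β log k - log β! + O(1/k)`. With `k = ⌊α p log p⌋` one has
`log k = log p + log log p + log α + o(1)` and `p / (2k) = (1 + O(1/k)) / (2α log p)`, so the
exponent `E = (p / (2k)) log C(β+k,k) - β/(2α)` satisfies `E · log p / log log p → β/(2α)`. In particular
`E → 0`, and `|exp E - 1 - E| ≤ E²` shows that `exp E - 1` may replace `E`. -/

open Filter Real Topology
open scoped Nat

namespace Nat

theorem succ_pow_le_factorial_mul_add_choose (β k : ℕ) : (k + 1) ^ β ≤ β ! * (β + k).choose k := by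
  rw [add_comm β k, choose_symm_add, ← ascFactorial_eq_factorial_mul_choose]
  exact pow_succ_le_ascFactorial _ _

theorem factorial_mul_add_choose_le_pow (β k : ℕ) : β ! * (β + k).choose k ≤ (k + β) ^ β := by
  rw [add_comm β k, choose_symm_add, ← ascFactorial_eq_factorial_mul_choose]
  exact ascFactorial_le_pow_add _ _

end Nat

theorem le_log_add_choose (β k : ℕ) :
    β * log (k + 1) - log (β ! : ℝ) ≤ log ((β + k).choose k : ℝ) := by
  have hC : (0 : ℝ) < (β + k).choose k := by exact_mod_cast Nat.choose_pos (by omega)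
  rw [sub_le_iff_le_add', ← log_mul (by positivity) hC.ne', ← log_pow]
  gcongr
  exact_mod_cast Nat.succ_pow_le_factorial_mul_add_choose β k

theorem log_add_choose_le (β k : ℕ) :
    log ((β + k).choose k : ℝ) ≤ β * log (k + β) - log (β ! : ℝ) := by
  have hC : (0 : ℝ) < (β + k).choose k := by exact_mod_cast Nat.choose_pos (by omega)
  rw [le_sub_iff_add_le', ← log_mul (by positivity) hC.ne', ← log_pow]
  gcongr
  exact_mod_cast Nat.factorial_mul_add_choose_le_pow β k

theorem tendsto_exp_sub_one_mul_of_tendsto_mul {ι : Type*} {l : Filter ι} {E L : ι → ℝ} {c : ℝ}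
    (hL : Tendsto L l atTop) (hEL : Tendsto (fun i => E i * L i) l (𝓝 c)) :
    Tendsto (fun i => (exp (E i) - 1) * L i) l (𝓝 c) := by
  have hE : Tendsto E l (𝓝 0) := by
    have := hEL.mul (tendsto_inv_atTop_zero.comp hL)
    rw [mul_zero] at this
    refine this.congr' ?_
    filter_upwards [hL.eventually_gt_atTop 0] with i hi
    simp [hi.ne']
  -- `|exp E - 1 - E| ≤ E ^ 2`, so the second-order part is `O(|E L| |E|) = o(1)`.
  have hquad : Tendsto (fun i => (exp (E i) - 1 - E i) * L i) l (𝓝 0) := by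
    have hbound : Tendsto (fun i => |E i * L i| * |E i|) l (𝓝 0) := by
      simpa using hEL.abs.mul hE.abs
    refine squeeze_zero_norm' ?_ hbound
    filter_upwards [hE.eventually (Metric.closedBall_mem_nhds 0 one_pos)] with i hi
    rw [Real.dist_0_eq_abs] at hi
    calc ‖(exp (E i) - 1 - E i) * L i‖ = |exp (E i) - 1 - E i| * |L i| := abs_mul _ _
      _ ≤ E i ^ 2 * |L i| := by gcongr; exact abs_exp_sub_one_sub_id_le hi
      _ = |E i * L i| * |E i| := by rw [abs_mul, ← sq_abs]; ring
  refine (zero_add c ▸ hquad.add hEL).congr fun i => ?_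
  ring

theorem tendsto_log_div_log_log_atTop :
    Tendsto (fun p : ℕ => log p / log (log p)) atTop atTop := by
  have hlog : Tendsto (fun p : ℕ => log p) atTop atTop :=
    tendsto_log_atTop.comp tendsto_natCast_atTop_atTop
  refine ((tendsto_exp_div_pow_atTop 1).comp (tendsto_log_atTop.comp hlog)).congr' ?_
  filter_upwards [hlog.eventually_gt_atTop 0] with p hp
  simp [exp_log hp]

theorem tendsto_mul_natCast_mul_log_atTop {α : ℝ} (hα : 0 < α) :
    Tendsto (fun p : ℕ => α * p * log p) atTop atTop :=
  (tendsto_natCast_atTop_atTop.const_mul_atTop hα).atTop_mul_atTop₀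
    (tendsto_log_atTop.comp tendsto_natCast_atTop_atTop)

theorem tendsto_div_floor_mul_natCast_mul_log {α : ℝ} (hα : 0 < α) :
    Tendsto (fun p : ℕ => α * p * log p / ⌊α * p * log p⌋₊) atTop (𝓝 1) := by
  simpa using (tendsto_nat_floor_div_atTop.comp (tendsto_mul_natCast_mul_log_atTop hα)).inv₀
    one_ne_zero

theorem tendsto_div_floor_sub_one_mul_log {α : ℝ} (hα : 0 < α) :
    Tendsto (fun p : ℕ => (α * p * log p / ⌊α * p * log p⌋₊ - 1) * log p) atTop (𝓝 0) := by
  have hx := tendsto_mul_natCast_mul_log_atTop hα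
  have hupper : Tendsto (fun p : ℕ => α * p * log p / ⌊α * p * log p⌋₊ * (α * p)⁻¹)
      atTop (𝓝 0) := by
    simpa using (tendsto_div_floor_mul_natCast_mul_log hα).mul
      (tendsto_inv_atTop_zero.comp (tendsto_natCast_atTop_atTop.const_mul_atTop hα))
  refine tendsto_of_tendsto_of_tendsto_of_le_of_le' tendsto_const_nhds hupper ?_ ?_
  all_goals
    filter_upwards [(tendsto_nat_floor_atTop.comp hx).eventually_ge_atTop 1,
      hx.eventually_gt_atTop 0, eventually_gt_atTop 0] with p hK hx0 hp
    have hK : (1 : ℝ) ≤ ⌊α * p * log p⌋₊ := by exact_mod_cast hK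
    have hfloor := Nat.floor_le hx0.le
    have hlt := Nat.lt_floor_add_one (α * p * log p)
    have hp : (0 : ℝ) < p := by exact_mod_cast hp
  · have : 1 ≤ α * p * log p / ⌊α * p * log p⌋₊ := by rw [le_div_iff₀ (by linarith)]; linarith
    have : 0 ≤ log p := by positivity
    have : 0 ≤ α * p * log p / ⌊α * p * log p⌋₊ - 1 := by linarith
    positivity
  · calc (α * p * log p / ⌊α * p * log p⌋₊ - 1) * log p
          = (α * p * log p - ⌊α * p * log p⌋₊) * log p / ⌊α * p * log p⌋₊ := by field_simp
      _ ≤ 1 * log p / ⌊α * p * log p⌋₊ := by gcongr; linarith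
      _ = α * p * log p / ⌊α * p * log p⌋₊ * (α * p)⁻¹ := by field_simp

theorem tendsto_log_floor_add_sub_log_div_log_log {α : ℝ} (hα : 0 < α) (c : ℝ) :
    Tendsto (fun p : ℕ => (log (⌊α * p * log p⌋₊ + c) - log p) / log (log p)) atTop (𝓝 1) := by
  have hx := tendsto_mul_natCast_mul_log_atTop hα
  have hlog : Tendsto (fun p : ℕ => log p) atTop atTop :=
    tendsto_log_atTop.comp tendsto_natCast_atTop_atTop
  have hratio : Tendsto (fun p : ℕ => (⌊α * p * log p⌋₊ + c) / (α * p * log p)) atTop (𝓝 1) := by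
    have := (tendsto_nat_floor_div_atTop.comp hx).add (tendsto_const_nhds.div_atTop hx (a := c))
    simpa [add_div] using this
  have hlim : Tendsto (fun p : ℕ => 1 + (log α + log ((⌊α * p * log p⌋₊ + c) / (α * p * log p)))
      / log (log p)) atTop (𝓝 1) := by
    have hlog_ratio : Tendsto (fun p : ℕ => log ((⌊α * p * log p⌋₊ + c) / (α * p * log p)))
        atTop (𝓝 0) := by
      simpa [Function.comp_def] using (continuousAt_log one_ne_zero).tendsto.comp hratio
    simpa using tendsto_const_nhds.add ((tendsto_const_nhds.add hlog_ratio).div_atTop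
      (tendsto_log_atTop.comp hlog))
  refine hlim.congr' ?_
  filter_upwards [(tendsto_nat_floor_atTop.comp hx).eventually_ge_atTop (⌈-c⌉₊ + 1),
    hlog.eventually_gt_atTop 1, eventually_gt_atTop 0] with p hK hlp hp
  have hKc : 0 < ⌊α * p * log p⌋₊ + c := by
    have hK : (⌈-c⌉₊ + 1 : ℝ) ≤ ⌊α * p * log p⌋₊ := by exact_mod_cast hK
    linarith [Nat.le_ceil (-c)]
  have hp : (0 : ℝ) < p := by exact_mod_cast hp
  have hllp : 0 < log (log p) := log_pos hlp
  have hlp : 0 < log p := by linarith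
  rw [log_div hKc.ne' (by positivity), log_mul (by positivity) hlp.ne',
    log_mul hα.ne' hp.ne']
  field_simp
  ring

theorem tendsto_floor_log_expansion {α : ℝ} (hα : 0 < α) (b d c : ℝ) :
    Tendsto (fun p : ℕ => ((p / (2 * ⌊α * p * log p⌋₊)) * (b * log (⌊α * p * log p⌋₊ + c) - d)
      - b / (2 * α)) * (log p / log (log p))) atTop (𝓝 (b / (2 * α))) := by
  have hx := tendsto_mul_natCast_mul_log_atTop hα
  have hlog : Tendsto (fun p : ℕ => log p) atTop atTop :=
    tendsto_log_atTop.comp tendsto_natCast_atTop_atTop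
  have hxK := tendsto_div_floor_mul_natCast_mul_log hα
  have hinv := tendsto_inv_atTop_zero.comp (tendsto_log_atTop.comp hlog)
  have hlim := (((hxK.mul (tendsto_log_floor_add_sub_log_div_log_log hα c)).add
    ((tendsto_div_floor_sub_one_mul_log hα).mul hinv)).const_mul (b / (2 * α))).sub
    ((hxK.mul hinv).const_mul (d / (2 * α)))
  simp only [mul_one, mul_zero, add_zero, sub_zero] at hlim
  refine hlim.congr' ?_
  filter_upwards [(tendsto_nat_floor_atTop.comp hx).eventually_ge_atTop 1,
    hlog.eventually_gt_atTop 1, eventually_gt_atTop 0] with p hK hlp hp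
  have hK : (1 : ℝ) ≤ ⌊α * p * log p⌋₊ := by exact_mod_cast hK
  have hp : (0 : ℝ) < p := by exact_mod_cast hp
  have hllp : 0 < log (log p) := log_pos hlp
  simp only [Function.comp_apply]
  field_simp
  ring

theorem stmt11_general (β : ℕ) (α : ℝ) (hα : 0 < α) :
    Tendsto (fun p : ℕ =>
        (((β + ⌊α * p * Real.log p⌋₊).choose ⌊α * p * Real.log p⌋₊ : ℝ)
            ^ ((p : ℝ) / (2 * (⌊α * p * Real.log p⌋₊ : ℝ))) / Real.exp (β / (2 * α)) - 1)
          * (Real.log p / Real.log (Real.log p)))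
      atTop (nhds (β / (2 * α))) := by
  have hEL : Tendsto (fun p : ℕ => (p / (2 * ⌊α * p * log p⌋₊) *
      log ((β + ⌊α * p * log p⌋₊).choose ⌊α * p * log p⌋₊) - β / (2 * α)) *
      (log p / log (log p))) atTop (𝓝 (β / (2 * α))) := by
    refine tendsto_of_tendsto_of_tendsto_of_le_of_le'
      (tendsto_floor_log_expansion hα β (log β !) 1)
      (tendsto_floor_log_expansion hα β (log β !) β) ?_ ?_
    all_goals
      filter_upwards [tendsto_log_div_log_log_atTop.eventually_ge_atTop 0] with p hL
      gcongr
    · exact le_log_add_choose β _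
    · exact log_add_choose_le β _
  refine (tendsto_exp_sub_one_mul_of_tendsto_mul tendsto_log_div_log_log_atTop hEL).congr
    fun p => ?_
  rw [exp_sub, rpow_def_of_pos (by exact_mod_cast Nat.choose_pos (by omega)), mul_comm (log _)]

/-- For fixed positive integer `β` and fixed `α > 0`, with `k = ⌊α p log p⌋`,
`lim_{p→∞} [ C(β + k, k)^(p/(2k)) / exp(β/(2α)) − 1 ] · (log p / log log p) = β/(2α)`. -/
theorem stmt11 (β : ℕ) (hβ : 0 < β) (α : ℝ) (hα : 0 < α) :
    Tendsto (fun p : ℕ =>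
        (((β + ⌊α * p * Real.log p⌋₊).choose ⌊α * p * Real.log p⌋₊ : ℝ)
            ^ ((p : ℝ) / (2 * (⌊α * p * Real.log p⌋₊ : ℝ))) / Real.exp (β / (2 * α)) - 1)
          * (Real.log p / Real.log (Real.log p)))
      atTop (nhds (β / (2 * α))) :=
  stmt11_general β α hα
end

section
/- For every real t > 0, the trigamma function satisfies (t + 1/2)/t² < ψ'(t) < (t + 1)/t², and the tetragamma function satisfies −1/t² − 2/t³ < ψ''(t) < −1/t² − 1/t³. -/
/-- The trigamma function `ψ'(t) = ∑_{n ≥ 0} 1/(t+n)²`. -/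
noncomputable def trigamma (t : ℝ) : ℝ := ∑' n : ℕ, 1 / (t + n) ^ 2

/-- The tetragamma function `ψ''(t) = −2 ∑_{n ≥ 0} 1/(t+n)³`. -/
noncomputable def tetragamma (t : ℝ) : ℝ := -2 * ∑' n : ℕ, 1 / (t + n) ^ 3

/-!
Each bound `B` compares with one term of the series through a rational inequality
`B x - B (x + 1) ≶ 1 / x ^ k` for `x > 0`. Summing it over `x = t + n` telescopes to `B t`
(the tail `B (t + N)` is nonnegative, or tends to `0`), and the strict inequality at the first
term survives the summation. The tetragamma bounds are the bounds for `∑ 1 / (t + n) ^ 3`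
multiplied by `-2`.
-/

open Filter Topology Finset

section Telescoping

variable {f G : ℝ → ℝ} {t : ℝ}

lemma sum_range_sub_comp_add (G : ℝ → ℝ) (t : ℝ) (N : ℕ) :
    ∑ k ∈ range N, (G (t + k) - G (t + k + 1)) = G t - G (t + N) := by
  simpa [add_assoc] using sum_range_sub' (fun k : ℕ => G (t + k)) N

lemma sum_range_comp_add_le_sub (h : ∀ x, t ≤ x → f x ≤ G x - G (x + 1)) (N : ℕ) :
    ∑ k ∈ range N, f (t + k) ≤ G t - G (t + N) := by
  rw [← sum_range_sub_comp_add]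
  exact sum_le_sum fun k _ => h _ (le_add_of_nonneg_right k.cast_nonneg)

lemma summable_comp_add_of_le_sub (hf : ∀ x, t ≤ x → 0 ≤ f x) (hG : ∀ x, t ≤ x → 0 ≤ G x)
    (h : ∀ x, t ≤ x → f x ≤ G x - G (x + 1)) : Summable fun n : ℕ => f (t + n) := by
  refine summable_of_sum_range_le (c := G t) (fun n => hf _ ?_) fun N => ?_
  · exact le_add_of_nonneg_right n.cast_nonneg
  · have := hG (t + N) (le_add_of_nonneg_right N.cast_nonneg)
    linarith [sum_range_comp_add_le_sub h N]

lemma tsum_comp_add_le_of_le_sub (hf : ∀ x, t ≤ x → 0 ≤ f x) (hG : ∀ x, t ≤ x → 0 ≤ G x)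
    (h : ∀ x, t ≤ x → f x ≤ G x - G (x + 1)) : ∑' n : ℕ, f (t + n) ≤ G t := by
  refine Real.tsum_le_of_sum_range_le (fun n => hf _ ?_) fun N => ?_
  · exact le_add_of_nonneg_right n.cast_nonneg
  · have := hG (t + N) (le_add_of_nonneg_right N.cast_nonneg)
    linarith [sum_range_comp_add_le_sub h N]

lemma le_tsum_comp_add_of_sub_le (hs : Summable fun n : ℕ => f (t + n))
    (hG : Tendsto G atTop (𝓝 0)) (h : ∀ x, t ≤ x → G x - G (x + 1) ≤ f x) :
    G t ≤ ∑' n : ℕ, f (t + n) := by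
  have hlim : Tendsto (fun N : ℕ => G t - G (t + N)) atTop (𝓝 (G t - 0)) :=
    tendsto_const_nhds.sub <| hG.comp <|
      tendsto_atTop_add_const_left _ t tendsto_natCast_atTop_atTop
  refine le_of_tendsto_of_tendsto' (by simpa using hlim) hs.hasSum.tendsto_sum_nat fun N => ?_
  rw [← sum_range_sub_comp_add]
  exact sum_le_sum fun k _ => h _ (le_add_of_nonneg_right k.cast_nonneg)

lemma tsum_comp_add_eq_add_tsum_comp_add_one (hs : Summable fun n : ℕ => f (t + n)) :
    ∑' n : ℕ, f (t + n) = f t + ∑' n : ℕ, f (t + 1 + n) := by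
  rw [hs.tsum_eq_zero_add]
  simp [add_assoc, add_comm (1 : ℝ)]

lemma tsum_comp_add_lt_of_lt_sub (hf : ∀ x, t ≤ x → 0 ≤ f x) (hG : ∀ x, t ≤ x → 0 ≤ G x)
    (h : ∀ x, t ≤ x → f x < G x - G (x + 1)) : ∑' n : ℕ, f (t + n) < G t := by
  have hle x (hx : t ≤ x) := (h x hx).le
  have htail : ∑' n : ℕ, f (t + 1 + n) ≤ G (t + 1) :=
    tsum_comp_add_le_of_le_sub (fun x hx => hf x (by linarith)) (fun x hx => hG x (by linarith))
      fun x hx => hle x (by linarith)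
  rw [tsum_comp_add_eq_add_tsum_comp_add_one (summable_comp_add_of_le_sub hf hG hle)]
  linarith [h t le_rfl]

lemma lt_tsum_comp_add_of_sub_lt (hs : Summable fun n : ℕ => f (t + n))
    (hG : Tendsto G atTop (𝓝 0)) (h : ∀ x, t ≤ x → G x - G (x + 1) < f x) :
    G t < ∑' n : ℕ, f (t + n) := by
  have hs' : Summable fun n : ℕ => f (t + 1 + n) := by
    simpa [add_assoc, add_comm (1 : ℝ)] using (summable_nat_add_iff 1).mpr hs
  have htail : G (t + 1) ≤ ∑' n : ℕ, f (t + 1 + n) :=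
    le_tsum_comp_add_of_sub_le hs' hG fun x hx => (h x (by linarith)).le
  rw [tsum_comp_add_eq_add_tsum_comp_add_one hs]
  linarith [h t le_rfl]

end Telescoping

section RationalBounds

variable {x : ℝ}

lemma one_div_sq_lt_sub_succ (hx : 0 < x) :
    1 / x ^ 2 < (x + 1) / x ^ 2 - (x + 1 + 1) / (x + 1) ^ 2 := by
  rw [div_sub_div _ _ (by positivity) (by positivity),
    div_lt_div_iff₀ (by positivity) (by positivity)]
  nlinarith [pow_pos hx 2, pow_pos hx 3, pow_pos hx 4]

lemma sub_succ_lt_one_div_sq (hx : 0 < x) :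
    (x + 1 / 2) / x ^ 2 - (x + 1 + 1 / 2) / (x + 1) ^ 2 < 1 / x ^ 2 := by
  rw [div_sub_div _ _ (by positivity) (by positivity),
    div_lt_div_iff₀ (by positivity) (by positivity)]
  nlinarith [pow_pos hx 2, pow_pos hx 3, pow_pos hx 4]

lemma one_div_cube_lt_sub_succ (hx : 0 < x) :
    1 / x ^ 3 < (x + 2) / (2 * x ^ 3) - (x + 1 + 2) / (2 * (x + 1) ^ 3) := by
  rw [div_sub_div _ _ (by positivity) (by positivity),
    div_lt_div_iff₀ (by positivity) (by positivity)]
  nlinarith [pow_pos hx 2, pow_pos hx 3, pow_pos hx 4, pow_pos hx 5, pow_pos hx 6]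

lemma sub_succ_lt_one_div_cube (hx : 0 < x) :
    (x + 1) / (2 * x ^ 3) - (x + 1 + 1) / (2 * (x + 1) ^ 3) < 1 / x ^ 3 := by
  rw [div_sub_div _ _ (by positivity) (by positivity),
    div_lt_div_iff₀ (by positivity) (by positivity)]
  nlinarith [pow_pos hx 2, pow_pos hx 3, pow_pos hx 4, pow_pos hx 5, pow_pos hx 6]

lemma tendsto_add_const_div_pow_atTop_zero (c : ℝ) (k : ℕ) :
    Tendsto (fun x : ℝ => (x + c) / x ^ (k + 2)) atTop (𝓝 0) := by
  have hlim : Tendsto (fun x : ℝ => x⁻¹ ^ (k + 1) + c * x⁻¹ ^ (k + 2)) atTop (𝓝 0) := by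
    simpa using (tendsto_inv_atTop_zero.pow (k + 1)).add
      ((tendsto_inv_atTop_zero.pow (k + 2)).const_mul c)
  refine hlim.congr' ?_
  filter_upwards [eventually_ne_atTop 0] with x hx
  rw [inv_pow, inv_pow]
  field_simp
  ring

end RationalBounds

lemma summable_one_div_add_pow (t : ℝ) {k : ℕ} (hk : 1 < k) :
    Summable fun n : ℕ => 1 / (t + n) ^ k := by
  refine Summable.of_norm <|
    ((Real.summable_one_div_nat_add_rpow t k).2 (by exact_mod_cast hk)).congr fun n => ?_
  rw [Real.rpow_natCast, norm_div, norm_one, norm_pow, Real.norm_eq_abs, add_comm]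

section Polygamma

variable {t : ℝ}

lemma trigamma_lt (ht : 0 < t) : trigamma t < (t + 1) / t ^ 2 :=
  tsum_comp_add_lt_of_lt_sub (f := fun x => 1 / x ^ 2) (G := fun x => (x + 1) / x ^ 2)
    (fun x hx => by have := ht.trans_le hx; positivity)
    (fun x hx => by have := ht.trans_le hx; positivity)
    fun _ hx => one_div_sq_lt_sub_succ (ht.trans_le hx)

lemma lt_trigamma (ht : 0 < t) : (t + 1 / 2) / t ^ 2 < trigamma t :=
  lt_tsum_comp_add_of_sub_lt (f := fun x => 1 / x ^ 2) (G := fun x => (x + 1 / 2) / x ^ 2)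
    (summable_one_div_add_pow t one_lt_two) (tendsto_add_const_div_pow_atTop_zero _ 0)
    fun _ hx => sub_succ_lt_one_div_sq (ht.trans_le hx)

lemma tetragamma_lt (ht : 0 < t) : tetragamma t < -1 / t ^ 2 - 1 / t ^ 3 := by
  have hG : Tendsto (fun x : ℝ => (x + 1) / (2 * x ^ 3)) atTop (𝓝 0) := by
    simpa [div_div, mul_comm] using (tendsto_add_const_div_pow_atTop_zero 1 1).div_const 2
  have hsum : (t + 1) / (2 * t ^ 3) < ∑' n : ℕ, 1 / (t + n) ^ 3 :=
    lt_tsum_comp_add_of_sub_lt (f := fun x => 1 / x ^ 3)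
      (summable_one_div_add_pow t (k := 3) (by norm_num)) hG
      fun _ hx => sub_succ_lt_one_div_cube (ht.trans_le hx)
  have hrhs : -1 / t ^ 2 - 1 / t ^ 3 = -2 * ((t + 1) / (2 * t ^ 3)) := by
    field_simp
    ring
  rw [tetragamma, hrhs]
  linarith

lemma lt_tetragamma (ht : 0 < t) : -1 / t ^ 2 - 2 / t ^ 3 < tetragamma t := by
  have hsum : ∑' n : ℕ, 1 / (t + n) ^ 3 < (t + 2) / (2 * t ^ 3) :=
    tsum_comp_add_lt_of_lt_sub (f := fun x => 1 / x ^ 3) (G := fun x => (x + 2) / (2 * x ^ 3))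
      (fun x hx => by have := ht.trans_le hx; positivity)
      (fun x hx => by have := ht.trans_le hx; positivity)
      fun _ hx => one_div_cube_lt_sub_succ (ht.trans_le hx)
  have hlhs : -1 / t ^ 2 - 2 / t ^ 3 = -2 * ((t + 2) / (2 * t ^ 3)) := by
    field_simp
    ring
  rw [tetragamma, hlhs]
  linarith

end Polygamma

/-- For every `t > 0`, `(t + 1/2)/t² < ψ'(t) < (t + 1)/t²` and
`−1/t² − 2/t³ < ψ''(t) < −1/t² − 1/t³`. -/
theorem stmt15 (t : ℝ) (ht : 0 < t) :
    ((t + 1 / 2) / t ^ 2 < trigamma t ∧ trigamma t < (t + 1) / t ^ 2) ∧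
    (-1 / t ^ 2 - 2 / t ^ 3 < tetragamma t ∧ tetragamma t < -1 / t ^ 2 - 1 / t ^ 3) :=
  ⟨⟨lt_trigamma ht, trigamma_lt ht⟩, lt_tetragamma ht, tetragamma_lt ht⟩
end

section
/- Let s ≥ 3/2 be real. The equation log ω − ω/(2+s) + ((1+s)/(2+s))·(1/ω) = s/(2+s) has a unique solution ω_0 on the interval (1, ∞); moreover ω_0 ∈ [1+s, ω_+], where ω_+ = −(2+s)·W_{−1}(−e^{(s−1)/(2+s)}/(2+s)) and W_{−1} is the lower real branch of the Lambert W function. -/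
/-!
Writing `φ(ω) = log ω − ω/(2+s)`, the equation is `κ(ω) = 0` with
`κ(ω) = φ(ω) + (1+s)/((2+s)ω) − s/(2+s)`, and `κ'(ω) = −(ω−1)(ω−(1+s))/((2+s)ω²)`.
So `κ` rises from `κ(1) = 0` on `[1, 1+s]` and then strictly decreases: it has exactly one zero
on `(1, ∞)`, and that zero lies in `[1+s, ∞)`. The point `ω₊` is the unique zero on `[2+s, ∞)`
of `φ − (s−1)/(2+s)`, found by the intermediate value theorem since `φ` decreases there. At `ω₊`
we get `κ(ω₊) = ((1+s)/ω₊ − 1)/(2+s) ≤ 0`, which traps the zero of `κ` in `[1+s, ω₊]`.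
-/

open Real Set

namespace KappaRoot

/-- `φ(ω) = log ω − ω/(2+s)`; the substitution `w = −ω/(2+s)` turns `φ(ω) = c` into
`w e^w = −e^{c}/(2+s)`, solved on `ω ≥ 2+s` by the lower Lambert branch. -/
noncomputable def phi (s x : ℝ) : ℝ := log x - x / (2 + s)

noncomputable def kappa (s x : ℝ) : ℝ := phi s x + (1 + s) / (2 + s) * (1 / x) - s / (2 + s)

variable {s x : ℝ}

theorem hasDerivAt_phi (hx : 0 < x) : HasDerivAt (phi s) (1 / x - 1 / (2 + s)) x :=
  ((hasDerivAt_log hx.ne').sub ((hasDerivAt_id x).div_const (2 + s))).congr_deriv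
    (by simp [one_div])

theorem hasDerivAt_kappa (hs : 0 < 2 + s) (hx : 0 < x) :
    HasDerivAt (kappa s) (-((x - 1) * (x - (1 + s))) / ((2 + s) * x ^ 2)) x := by
  have hinv : HasDerivAt (fun y => (1 + s) / (2 + s) * (1 / y))
      ((1 + s) / (2 + s) * -(x ^ 2)⁻¹) x := by
    simpa [one_div] using (hasDerivAt_inv hx.ne').const_mul ((1 + s) / (2 + s))
  exact (((hasDerivAt_phi hx).add hinv).sub_const (s / (2 + s))).congr_deriv
    (by field_simp; ring)

theorem continuousOn_phi : ContinuousOn (phi s) (Ioi 0) :=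
  continuousOn_of_forall_continuousAt fun _ hx => (hasDerivAt_phi hx).continuousAt

theorem continuousOn_kappa : ContinuousOn (kappa s) (Ioi 0) := by
  unfold kappa
  exact (continuousOn_phi.add (continuousOn_const.mul
    (continuousOn_const.div continuousOn_id fun _ hx => ne_of_gt hx))).sub continuousOn_const

theorem strictAntiOn_phi (hs : 0 < 2 + s) : StrictAntiOn (phi s) (Ici (2 + s)) := by
  refine strictAntiOn_of_deriv_neg (convex_Ici _)
    (continuousOn_phi.mono fun x hx => hs.trans_le hx) fun x hx => ?_
  rw [interior_Ici] at hx
  rw [(hasDerivAt_phi (hs.trans hx)).deriv, sub_neg]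
  exact one_div_lt_one_div_of_lt hs hx

theorem strictMonoOn_kappa : StrictMonoOn (kappa s) (Icc 1 (1 + s)) := by
  refine strictMonoOn_of_deriv_pos (convex_Icc _ _)
    (continuousOn_kappa.mono fun x hx => one_pos.trans_le hx.1) fun x hx => ?_
  obtain ⟨hx1, hxs⟩ : 1 < x ∧ x < 1 + s := by rwa [interior_Icc] at hx
  have hs : 0 < 2 + s := by linarith
  rw [(hasDerivAt_kappa hs (one_pos.trans hx1)).deriv]
  have : 0 < (x - 1) * (1 + s - x) := mul_pos (by linarith) (by linarith)
  exact div_pos (by linarith) (by positivity)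

theorem strictAntiOn_kappa (hs : 0 ≤ s) : StrictAntiOn (kappa s) (Ici (1 + s)) := by
  refine strictAntiOn_of_deriv_neg (convex_Ici _)
    (continuousOn_kappa.mono fun x hx => (by linarith : (0 : ℝ) < 1 + s).trans_le hx)
    fun x hx => ?_
  rw [interior_Ici] at hx
  have hx' : 1 + s < x := hx
  have hc : 0 < 2 + s := by linarith
  have hx0 : 0 < x := by linarith
  rw [(hasDerivAt_kappa hc hx0).deriv]
  have : 0 < (x - 1) * (x - (1 + s)) := mul_pos (by linarith) (by linarith)
  exact div_neg_of_neg_of_pos (by linarith) (mul_pos hc (pow_pos hx0 2))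

theorem kappa_one : kappa s 1 = 0 := by
  simp only [kappa, phi, log_one]
  ring

theorem kappa_pos (hx : 1 < x) (hxs : x ≤ 1 + s) : 0 < kappa s x := by
  rw [← kappa_one (s := s)]
  exact strictMonoOn_kappa ⟨le_rfl, by linarith⟩ ⟨hx.le, hxs⟩ hx

theorem kappa_nonpos_of_phi_eq (hs : 0 ≤ s) (hx : 1 + s ≤ x)
    (h : phi s x = (s - 1) / (2 + s)) : kappa s x ≤ 0 := by
  have hle : (1 + s) / x ≤ 1 := (div_le_one (by linarith)).mpr hx
  have key : kappa s x = ((1 + s) / x - 1) / (2 + s) := by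
    rw [kappa, h]; ring
  rw [key]
  exact div_nonpos_of_nonpos_of_nonneg (by linarith) (by linarith)

/-- From `log (c/3) ≥ 1 − 3/c` and `log 3 > 1`. -/
theorem div_le_phi_two_add (hs : 1 ≤ s) : (s - 1) / (2 + s) ≤ phi s (2 + s) := by
  have hc : (0 : ℝ) < 2 + s := by linarith
  have hlog3 : 1 < log 3 := by
    rw [lt_log_iff_exp_lt (by norm_num)]
    exact exp_one_lt_d9.trans (by norm_num)
  have hlog : 1 - ((2 + s) / 3)⁻¹ ≤ log ((2 + s) / 3) := one_sub_inv_le_log_of_pos (by positivity)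
  rw [log_div hc.ne' (by norm_num), inv_div] at hlog
  have e1 : (s - 1) / (2 + s) = 1 - 3 / (2 + s) := by field_simp; ring
  rw [phi, e1, div_self hc.ne']
  linarith

theorem phi_le_neg_two (hs : 0 < 2 + s) : phi s (4 * (2 + s) ^ 2) ≤ -2 := by
  have hlog : log (4 * (2 + s) ^ 2) = 2 * log (2 * (2 + s)) := by
    rw [show 4 * (2 + s) ^ 2 = (2 * (2 + s)) ^ 2 by ring, log_pow]
    norm_num
  have hle : log (2 * (2 + s)) ≤ 2 * (2 + s) - 1 := log_le_sub_one_of_pos (by linarith)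
  have hdiv : 4 * (2 + s) ^ 2 / (2 + s) = 4 * (2 + s) := by field_simp
  rw [phi, hlog, hdiv]
  linarith

theorem exists_phi_eq (hs : 1 ≤ s) : ∃ ω, 2 + s ≤ ω ∧ phi s ω = (s - 1) / (2 + s) := by
  have hc : (0 : ℝ) < 2 + s := by linarith
  have hM : 2 + s ≤ 4 * (2 + s) ^ 2 := by nlinarith
  have hmem : (s - 1) / (2 + s) ∈ Icc (phi s (4 * (2 + s) ^ 2)) (phi s (2 + s)) :=
    ⟨(phi_le_neg_two hc).trans (by rw [le_div_iff₀ hc]; linarith), div_le_phi_two_add hs⟩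
  obtain ⟨ω, hω, hφ⟩ := intermediate_value_Icc' hM
    (continuousOn_phi.mono fun x hx => hc.trans_le hx.1) hmem
  exact ⟨ω, hω.1, hφ⟩

theorem exists_kappa_eq_zero (hs : 0 ≤ s) {ωp : ℝ} (hωp : 1 + s ≤ ωp) (hκ : kappa s ωp ≤ 0) :
    ∃ ω ∈ Icc (1 + s) ωp, kappa s ω = 0 := by
  have h1s : (1 : ℝ) ≤ 1 + s := by linarith
  have hpos : 0 ≤ kappa s (1 + s) :=
    kappa_one (s := s) ▸ strictMonoOn_kappa.monotoneOn ⟨le_rfl, h1s⟩ ⟨h1s, le_rfl⟩ h1s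
  exact intermediate_value_Icc' hωp
    (continuousOn_kappa.mono fun x hx => (by linarith : (0 : ℝ) < 1 + s).trans_le hx.1) ⟨hκ, hpos⟩

theorem eq_of_kappa_eq_zero (hs : 0 ≤ s) {y : ℝ} (hx : 1 < x) (hy : 1 + s ≤ y)
    (hκx : kappa s x = 0) (hκy : kappa s y = 0) : x = y := by
  have hxs : 1 + s ≤ x := by
    by_contra! h
    exact (kappa_pos hx h.le).ne' hκx
  exact strictAntiOn_kappa hs |>.injOn hxs hy (hκx.trans hκy.symm)

end KappaRoot

open KappaRoot in
/-- Let `s ≥ 3/2`. The equation `log ω − ω/(2+s) + ((1+s)/(2+s))·(1/ω) = s/(2+s)` has a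
unique solution `ω₀` on `(1, ∞)`; moreover `ω₀ ∈ [1+s, ω₊]`, where
`ω₊ = −(2+s)·W₋₁(−e^{(s−1)/(2+s)}/(2+s))` is characterized as the unique point with
`ω₊ ≥ 2+s` satisfying `log ω₊ − ω₊/(2+s) = (s−1)/(2+s)` (the defining property of the
lower Lambert branch after the change of variables `w = −ω₊/(2+s)`). -/
theorem stmt16 (s : ℝ) (hs : 3 / 2 ≤ s) :
    ∃ ω₀ ωp : ℝ,
      (1 < ω₀ ∧ Real.log ω₀ - ω₀ / (2 + s) + (1 + s) / (2 + s) * (1 / ω₀) = s / (2 + s)) ∧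
      (∀ ω : ℝ, 1 < ω →
        Real.log ω - ω / (2 + s) + (1 + s) / (2 + s) * (1 / ω) = s / (2 + s) → ω = ω₀) ∧
      (2 + s ≤ ωp ∧ Real.log ωp - ωp / (2 + s) = (s - 1) / (2 + s)) ∧
      (∀ ω : ℝ, 2 + s ≤ ω → Real.log ω - ω / (2 + s) = (s - 1) / (2 + s) → ω = ωp) ∧
      ω₀ ∈ Set.Icc (1 + s) ωp := by
  have hs0 : 0 ≤ s := by linarith
  obtain ⟨ωp, hωp, hφ⟩ := exists_phi_eq (by linarith : 1 ≤ s)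
  obtain ⟨ω₀, hω₀, hκ⟩ :=
    exists_kappa_eq_zero hs0 (by linarith) (kappa_nonpos_of_phi_eq hs0 (by linarith) hφ)
  refine ⟨ω₀, ωp, ⟨by linarith [hω₀.1], sub_eq_zero.mp hκ⟩, fun ω hω h => ?_, ⟨hωp, hφ⟩,
    fun ω hω h => (strictAntiOn_phi (by linarith)).injOn hω hωp (h.trans hφ.symm), hω₀⟩
  exact eq_of_kappa_eq_zero hs0 hω hω₀.1 (sub_eq_zero.mpr h) hκ
end

section
/- For x ∈ [−1/e, 0), the lower Lambert branch satisfies −W_{−1}(x) ≤ −log(−x) + log(−log(−x)) + 1/2, and in particular −W_{−1}(x) ≤ −2 log(−x) when −log(−x) ≥ log(−log(−x)) + 1/2. -/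
/-- For `x ∈ [−1/e, 0)`, the lower Lambert branch value `w = W₋₁(x)` — characterized as the
solution `w ≤ −1` of `w e^w = x` — satisfies
`−w ≤ −log(−x) + log(−log(−x)) + 1/2`; in particular `−w ≤ −2 log(−x)` whenever
`−log(−x) ≥ log(−log(−x)) + 1/2`. -/
theorem stmt17 (x : ℝ) (hx : x ∈ Set.Ico (-(1 / Real.exp 1)) 0)
    (w : ℝ) (hw : w ≤ -1) (hwx : w * Real.exp w = x) :
    -w ≤ -Real.log (-x) + Real.log (-Real.log (-x)) + 1 / 2 ∧
    (Real.log (-Real.log (-x)) + 1 / 2 ≤ -Real.log (-x) → -w ≤ -2 * Real.log (-x)) := by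
  obtain ⟨hx1, hx2⟩ := hx
  set u : ℝ := -w with hu_def
  have hu : 1 ≤ u := by simp only [hu_def]; linarith
  have hupos : (0:ℝ) < u := by linarith
  have hxu : -x = u * Real.exp (-u) := by
    rw [← hwx]; simp only [hu_def, neg_neg]; ring
  have hlog : Real.log (-x) = Real.log u - u := by
    rw [hxu, Real.log_mul (by positivity) (Real.exp_ne_zero _), Real.log_exp]; ring
  have hlu : Real.log u ≤ u - 1 := Real.log_le_sub_one_of_pos hupos
  have hpos : 0 < u - Real.log u := by linarith
  have hue : Real.log u ≤ u / Real.exp 1 := by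
    have h := Real.log_le_sub_one_of_pos (show 0 < u / Real.exp 1 by positivity)
    rw [Real.log_div (by linarith) (Real.exp_ne_zero 1), Real.log_exp] at h
    linarith
  have key : Real.log u ≤ Real.log (u - Real.log u) + 1/2 := by
    have hs2 : Real.exp (1/2) * Real.exp (1/2) = Real.exp 1 := by
      rw [← Real.exp_add]; norm_num
    have hspos : (0:ℝ) < Real.exp (1/2) := Real.exp_pos _
    have hepos : (0:ℝ) < Real.exp 1 := Real.exp_pos _
    have he1 : (2.7182818283:ℝ) < Real.exp 1 := Real.exp_one_gt_d9
    have he2 : Real.exp 1 < 2.7182818286 := Real.exp_one_lt_d9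
    have hsub : Real.exp (1/2) < 1.6488 := by nlinarith
    have hslow : (1.6487:ℝ) < Real.exp (1/2) := by nlinarith
    have hkey : Real.exp 1 ≤ Real.exp (1/2) * (Real.exp 1 - 1) := by nlinarith
    have hue' : Real.log u * Real.exp 1 ≤ u := (le_div_iff₀ hepos).mp hue
    have h1 : u ≤ Real.exp (1/2) * (u - Real.log u) := by
      nlinarith [mul_le_mul_of_nonneg_left hue' hspos.le,
        mul_le_mul_of_nonneg_left hkey hupos.le, hepos]
    have hfin := Real.log_le_log hupos h1
    rw [Real.log_mul (ne_of_gt hspos) (ne_of_gt hpos), Real.log_exp] at hfin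
    linarith
  have main : -w ≤ -Real.log (-x) + Real.log (-Real.log (-x)) + 1 / 2 := by
    rw [hlog]
    have : -(Real.log u - u) = u - Real.log u := by ring
    rw [this]
    linarith
  refine ⟨main, fun h => ?_⟩
  rw [hlog] at h ⊢
  have : -(Real.log u - u) = u - Real.log u := by ring
  rw [this] at h
  have h2 : Real.log (-(Real.log u - u)) = Real.log (u - Real.log u) := by ring_nf
  linarith [main, hlog]
end
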